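/- arXiv:1904.03737 — 2 statements merged into one kernel-verified Lean document; each statement's English description precedes it below -/
import Mathlib

section
/- Let Δ ∈ R^p, let S ⊆ {1,…,p} with |S| = s, and suppose that for constants λ > 0, c_H ≥ 0, c_ρ ≥ 0 and quantities H, R ≥ 0 the inequality (1/2)‖Δ_{S^c}‖₁ ≤ (3/2)‖Δ_S‖₁ + (√s_β/λ) c_H R + (√s/λ) c_ρ R holds, and additionally R ≤ 3 c^{1/2} ‖Δ‖₂ for some c > 0. Then ‖Δ‖₁ ≤ (1 + max(18 c_H c^{1/2}/λ, 9, 18 c_ρ c^{1/2}/λ)) · max(√s, √s_β) · ‖Δ‖₂. -/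
open Finset

/-- Cone lemma: if `(1/2)‖Δ_{S^c}‖₁ ≤ (3/2)‖Δ_S‖₁ + (√s_β/λ)c_H R + (√s/λ)c_ρ R` and
`R ≤ 3√c ‖Δ‖₂`, then
`‖Δ‖₁ ≤ (1 + max(18c_H√c/λ, 9, 18c_ρ√c/λ)) max(√s, √s_β) ‖Δ‖₂`. -/
theorem stmt_10 (p s : ℕ) (Δ : Fin p → ℝ) (S : Finset (Fin p)) (hScard : S.card = s)
    (lam c_H c_ρ H R s_β c : ℝ)
    (hlam : 0 < lam) (hcH : 0 ≤ c_H) (hcρ : 0 ≤ c_ρ) (hH : 0 ≤ H) (hR : 0 ≤ R)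
    (hsβ : 0 ≤ s_β) (hc : 0 < c)
    (hkey : (1 / 2) * ∑ j ∈ Sᶜ, |Δ j| ≤
      (3 / 2) * (∑ j ∈ S, |Δ j|) + (Real.sqrt s_β / lam) * c_H * R +
        (Real.sqrt s / lam) * c_ρ * R)
    (hRbound : R ≤ 3 * Real.sqrt c * Real.sqrt (∑ j, (Δ j) ^ 2)) :
    (∑ j, |Δ j|) ≤
      (1 + max (18 * c_H * Real.sqrt c / lam)
          (max 9 (18 * c_ρ * Real.sqrt c / lam))) *
        max (Real.sqrt s) (Real.sqrt s_β) * Real.sqrt (∑ j, (Δ j) ^ 2) := by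
  set N := Real.sqrt (∑ j, (Δ j) ^ 2) with hNdef
  set M := max (Real.sqrt s) (Real.sqrt s_β) with hMdef
  set K := max (18 * c_H * Real.sqrt c / lam) (max 9 (18 * c_ρ * Real.sqrt c / lam)) with hKdef
  have hN : 0 ≤ N := Real.sqrt_nonneg _
  have hM : 0 ≤ M := le_trans (Real.sqrt_nonneg _) (le_max_left _ _)
  set A := ∑ j ∈ S, |Δ j| with hAdef
  set B := ∑ j ∈ Sᶜ, |Δ j| with hBdef
  have hA0 : 0 ≤ A := Finset.sum_nonneg fun j _ => abs_nonneg _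
  have hsplit : (∑ j, |Δ j|) = A + B := (Finset.sum_add_sum_compl S _).symm
  -- Cauchy-Schwarz : A ≤ √s * N
  have hCS : A ^ 2 ≤ (s : ℝ) * ∑ j ∈ S, (Δ j) ^ 2 := by
    have h := Finset.sum_mul_sq_le_sq_mul_sq S (fun _ => (1 : ℝ)) (fun j => |Δ j|)
    simpa [hScard, sq_abs, mul_comm] using h
  have hsum_le : (∑ j ∈ S, (Δ j) ^ 2) ≤ ∑ j, (Δ j) ^ 2 :=
    Finset.sum_le_sum_of_subset_of_nonneg (Finset.subset_univ S) (fun j _ _ => sq_nonneg _)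
  have hA : A ≤ Real.sqrt s * N := by
    have h1 : A ^ 2 ≤ (s : ℝ) * ∑ j, (Δ j) ^ 2 := by
      refine hCS.trans ?_
      exact mul_le_mul_of_nonneg_left hsum_le (Nat.cast_nonneg s)
    have h2 : A = Real.sqrt (A ^ 2) := (Real.sqrt_sq hA0).symm
    rw [h2]
    calc Real.sqrt (A ^ 2) ≤ Real.sqrt ((s : ℝ) * ∑ j, (Δ j) ^ 2) := Real.sqrt_le_sqrt h1
      _ = Real.sqrt s * N := Real.sqrt_mul (Nat.cast_nonneg s) _
  have hsM : Real.sqrt s ≤ M := le_max_left _ _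
  have hsβM : Real.sqrt s_β ≤ M := le_max_right _ _
  have hAM : A ≤ M * N := hA.trans (mul_le_mul_of_nonneg_right hsM hN)
  -- bound the R terms
  have hRN : R ≤ 3 * Real.sqrt c * N := hRbound
  have hcsq : 0 ≤ Real.sqrt c := Real.sqrt_nonneg _
  have hH1 : Real.sqrt s_β * c_H * R ≤ M * c_H * (3 * Real.sqrt c * N) := by
    have h1 : Real.sqrt s_β * c_H * R ≤ M * c_H * R := by
      have := mul_le_mul_of_nonneg_right hsβM (mul_nonneg hcH hR)
      nlinarith
    refine h1.trans ?_
    exact mul_le_mul_of_nonneg_left hRN (mul_nonneg hM hcH)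
  have hH2 : Real.sqrt s * c_ρ * R ≤ M * c_ρ * (3 * Real.sqrt c * N) := by
    have h1 : Real.sqrt s * c_ρ * R ≤ M * c_ρ * R := by
      have := mul_le_mul_of_nonneg_right hsM (mul_nonneg hcρ hR)
      nlinarith
    refine h1.trans ?_
    exact mul_le_mul_of_nonneg_left hRN (mul_nonneg hM hcρ)
  -- From hkey : B ≤ 3A + 2 T1 + 2 T2
  have hB : B ≤ 3 * A + 2 * ((Real.sqrt s_β / lam) * c_H * R) +
      2 * ((Real.sqrt s / lam) * c_ρ * R) := by linarith [hkey]
  have hT1 : (Real.sqrt s_β / lam) * c_H * R ≤ M * c_H * (3 * Real.sqrt c * N) / lam := by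
    have e : (Real.sqrt s_β / lam) * c_H * R = (Real.sqrt s_β * c_H * R) / lam := by ring
    rw [e]
    exact (div_le_div_iff_of_pos_right hlam).mpr hH1
  have hT2 : (Real.sqrt s / lam) * c_ρ * R ≤ M * c_ρ * (3 * Real.sqrt c * N) / lam := by
    have e : (Real.sqrt s / lam) * c_ρ * R = (Real.sqrt s * c_ρ * R) / lam := by ring
    rw [e]
    exact (div_le_div_iff_of_pos_right hlam).mpr hH2
  have hTot : A + B ≤ 4 * (M * N) + 2 * (M * c_H * (3 * Real.sqrt c * N) / lam) +
      2 * (M * c_ρ * (3 * Real.sqrt c * N) / lam) := by linarith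
  have hfact : 4 * (M * N) + 2 * (M * c_H * (3 * Real.sqrt c * N) / lam) +
      2 * (M * c_ρ * (3 * Real.sqrt c * N) / lam)
      = (4 + 6 * c_H * Real.sqrt c / lam + 6 * c_ρ * Real.sqrt c / lam) * (M * N) := by
    ring
  have hK9 : (9:ℝ) ≤ K := le_trans (le_max_left _ _) (le_max_right _ _)
  have hKH : 18 * c_H * Real.sqrt c / lam ≤ K := le_max_left _ _
  have hKρ : 18 * c_ρ * Real.sqrt c / lam ≤ K := le_trans (le_max_right _ _) (le_max_right _ _)
  have hcoef : 4 + 6 * c_H * Real.sqrt c / lam + 6 * c_ρ * Real.sqrt c / lam ≤ 1 + K := by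
    have e1 : 6 * c_H * Real.sqrt c / lam = (18 * c_H * Real.sqrt c / lam) / 3 := by ring
    have e2 : 6 * c_ρ * Real.sqrt c / lam = (18 * c_ρ * Real.sqrt c / lam) / 3 := by ring
    rw [e1, e2]; linarith
  calc (∑ j, |Δ j|) = A + B := hsplit
    _ ≤ (4 + 6 * c_H * Real.sqrt c / lam + 6 * c_ρ * Real.sqrt c / lam) * (M * N) := by
        rw [← hfact]; exact hTot
    _ ≤ (1 + K) * (M * N) := mul_le_mul_of_nonneg_right hcoef (mul_nonneg hM hN)
    _ = (1 + K) * M * N := by ring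
end

section
/- Let χ(η) be a parameter with influence function χ¹_η(O) = S_{ab} a(Z)b(Z) + m_a(O,a) + m_b(O,b) + S₀ − χ(η), and suppose for all h ∈ L₂(P_Z), E[S_{ab} a(Z) h(Z) + m_b(O,h)] = 0 and E[S_{ab} b(Z) h(Z) + m_a(O,h)] = 0. Then for any candidate functions a′, b′ ∈ L₂(P_Z) (with all relevant products integrable), χ(η′) − χ(η) + E_η[χ¹_{η′}] = E_η[S_{ab}(a′(Z) − a(Z))(b′(Z) − b(Z))], where χ¹_{η′} is the influence function evaluated at (a′,b′,χ(η′)). -/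
open MeasureTheory

/-!
Since `m_a` and `m_b` are linear, `Υ(a′, b′) = S a′ b′ + m_a(a′) + m_b(b′) + S₀` is exactly
`S (a′ - a)(b′ - b)` plus the derivatives of `Υ` at `(a, b)` in the directions `b′ - b` and
`a′ - a`, plus `Υ(a, b)`. The orthogonality conditions say those two derivatives have mean zero,
and `Υ(a, b)` has mean `χ`, so only the cross term survives.
-/

theorem bilinear_score_expansion {ζ : Type*} (s s₀ : ℝ) (z : ζ) (ma mb : (ζ → ℝ) → ℝ)
    (hma_sub : ∀ h₁ h₂ : ζ → ℝ, ma (h₁ - h₂) = ma h₁ - ma h₂)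
    (hmb_sub : ∀ h₁ h₂ : ζ → ℝ, mb (h₁ - h₂) = mb h₁ - mb h₂) (a b a' b' : ζ → ℝ) :
    s * a' z * b' z + ma a' + mb b' + s₀ =
      s * (a' z - a z) * (b' z - b z) + (s * a z * (b' z - b z) + mb (b' - b)) +
        (s * b z * (a' z - a z) + ma (a' - a)) + (s * a z * b z + ma a + mb b + s₀) := by
  rw [hma_sub, hmb_sub]
  ring

theorem stmt_15_general {Ω ζ : Type*} [MeasurableSpace Ω] (μ : Measure Ω)
    [IsProbabilityMeasure μ]
    (Z : Ω → ζ) (Sab S0 : Ω → ℝ) (ma mb : Ω → (ζ → ℝ) → ℝ)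
    (hma_sub : ∀ (ω : Ω) (h₁ h₂ : ζ → ℝ), ma ω (h₁ - h₂) = ma ω h₁ - ma ω h₂)
    (hmb_sub : ∀ (ω : Ω) (h₁ h₂ : ζ → ℝ), mb ω (h₁ - h₂) = mb ω h₁ - mb ω h₂)
    (a b a' b' : ζ → ℝ) (χ χ' : ℝ)
    -- orthogonality: the derivative of the influence function in the direction of one
    -- nuisance is an unbiased estimating function for the other
    (horthb : ∀ h : ζ → ℝ,
      Integrable (fun ω => Sab ω * a (Z ω) * h (Z ω) + mb ω h) μ →
        ∫ ω, (Sab ω * a (Z ω) * h (Z ω) + mb ω h) ∂μ = 0)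
    (hortha : ∀ h : ζ → ℝ,
      Integrable (fun ω => Sab ω * b (Z ω) * h (Z ω) + ma ω h) μ →
        ∫ ω, (Sab ω * b (Z ω) * h (Z ω) + ma ω h) ∂μ = 0)
    -- integrability of the relevant terms
    (hint1 : Integrable (fun ω =>
      Sab ω * a (Z ω) * (b' (Z ω) - b (Z ω)) + mb ω (b' - b)) μ)
    (hint2 : Integrable (fun ω =>
      Sab ω * b (Z ω) * (a' (Z ω) - a (Z ω)) + ma ω (a' - a)) μ)
    (hint3 : Integrable (fun ω =>
      Sab ω * (a' (Z ω) - a (Z ω)) * (b' (Z ω) - b (Z ω))) μ)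
    (hint5 : Integrable (fun ω =>
      Sab ω * a (Z ω) * b (Z ω) + ma ω a + mb ω b + S0 ω) μ)
    -- the parameter at η is the mean of Υ(a,b), i.e. E_η[χ¹_η] = 0
    (hχ : ∫ ω, (Sab ω * a (Z ω) * b (Z ω) + ma ω a + mb ω b + S0 ω) ∂μ = χ) :
    χ' - χ +
        ∫ ω, (Sab ω * a' (Z ω) * b' (Z ω) + ma ω a' + mb ω b' + S0 ω - χ') ∂μ =
      ∫ ω, Sab ω * (a' (Z ω) - a (Z ω)) * (b' (Z ω) - b (Z ω)) ∂μ := by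
  have hexpand := funext fun ω => bilinear_score_expansion (Sab ω) (S0 ω) (Z ω) (ma ω) (mb ω)
    (hma_sub ω) (hmb_sub ω) a b a' b'
  have hint4 : Integrable (fun ω => Sab ω * a' (Z ω) * b' (Z ω) + ma ω a' + mb ω b' + S0 ω) μ :=
    hexpand ▸ ((hint3.add hint1).add hint2).add hint5
  have hb0 := horthb (b' - b) hint1
  have ha0 := hortha (a' - a) hint2
  have hsplit := integral_add' ((hint3.add hint1).add hint2) hint5
  rw [integral_add' (hint3.add hint1) hint2, integral_add' hint3 hint1] at hsplit
  simp only [Pi.add_apply, Pi.sub_apply] at hsplit hb0 ha0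
  rw [integral_sub hint4 (integrable_const χ'), hexpand, hsplit, hb0, ha0, hχ]
  simp

/-- Mixed bias property for functionals with bilinear influence functions.  With
`χ¹_{η′}(O) = S_{ab}a′(Z)b′(Z) + m_a(O,a′) + m_b(O,b′) + S₀ − χ′`, if
`E[S_{ab}a(Z)h(Z) + m_b(O,h)] = 0` and `E[S_{ab}b(Z)h(Z) + m_a(O,h)] = 0` for all
(integrable) `h`, and `χ = E[Υ(a,b)]`, then
`χ′ − χ + E_η[χ¹_{η′}] = E_η[S_{ab}(a′(Z) − a(Z))(b′(Z) − b(Z))]`. -/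
theorem stmt_15 {Ω ζ : Type*} [MeasurableSpace Ω] (μ : Measure Ω)
    [IsProbabilityMeasure μ]
    (Z : Ω → ζ) (Sab S0 : Ω → ℝ) (ma mb : Ω → (ζ → ℝ) → ℝ)
    (hma_sub : ∀ (ω : Ω) (h₁ h₂ : ζ → ℝ), ma ω (h₁ - h₂) = ma ω h₁ - ma ω h₂)
    (hmb_sub : ∀ (ω : Ω) (h₁ h₂ : ζ → ℝ), mb ω (h₁ - h₂) = mb ω h₁ - mb ω h₂)
    (a b a' b' : ζ → ℝ) (χ χ' : ℝ)
    -- orthogonality: the derivative of the influence function in the direction of one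
    -- nuisance is an unbiased estimating function for the other
    (horthb : ∀ h : ζ → ℝ,
      Integrable (fun ω => Sab ω * a (Z ω) * h (Z ω) + mb ω h) μ →
        ∫ ω, (Sab ω * a (Z ω) * h (Z ω) + mb ω h) ∂μ = 0)
    (hortha : ∀ h : ζ → ℝ,
      Integrable (fun ω => Sab ω * b (Z ω) * h (Z ω) + ma ω h) μ →
        ∫ ω, (Sab ω * b (Z ω) * h (Z ω) + ma ω h) ∂μ = 0)
    -- integrability of the relevant terms
    (hint1 : Integrable (fun ω =>
      Sab ω * a (Z ω) * (b' (Z ω) - b (Z ω)) + mb ω (b' - b)) μ)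
    (hint2 : Integrable (fun ω =>
      Sab ω * b (Z ω) * (a' (Z ω) - a (Z ω)) + ma ω (a' - a)) μ)
    (hint3 : Integrable (fun ω =>
      Sab ω * (a' (Z ω) - a (Z ω)) * (b' (Z ω) - b (Z ω))) μ)
    (hint4 : Integrable (fun ω =>
      Sab ω * a' (Z ω) * b' (Z ω) + ma ω a' + mb ω b' + S0 ω) μ)
    (hint5 : Integrable (fun ω =>
      Sab ω * a (Z ω) * b (Z ω) + ma ω a + mb ω b + S0 ω) μ)
    -- the parameter at η is the mean of Υ(a,b), i.e. E_η[χ¹_η] = 0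
    (hχ : ∫ ω, (Sab ω * a (Z ω) * b (Z ω) + ma ω a + mb ω b + S0 ω) ∂μ = χ) :
    χ' - χ +
        ∫ ω, (Sab ω * a' (Z ω) * b' (Z ω) + ma ω a' + mb ω b' + S0 ω - χ') ∂μ =
      ∫ ω, Sab ω * (a' (Z ω) - a (Z ω)) * (b' (Z ω) - b (Z ω)) ∂μ :=
  stmt_15_general μ Z Sab S0 ma mb hma_sub hmb_sub a b a' b' χ χ' horthb hortha hint1 hint2 hint3
    hint5 hχ
end
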